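/- arXiv:2504.04746 — 2 statements merged into one kernel-verified Lean document; each statement's English description precedes it below -/
import Mathlib

section
/- Let O be a DVR with uniformizer π such that the fraction field O_π has characteristic 0, and let G = ⟨σ⟩ be cyclic of order p acting O-linearly on a finitely generated free O-module W such that the induced action of σ on W/πW is trivial and W admits an O-basis of σ-eigenvectors with eigenvalues that are p-th roots of unity. Then H^2(G, W) ≅ W^G / p·W^G, where H^2 denotes group cohomology. -/
open Pointwise

/-- Let `O` be a DVR of mixed characteristic (fraction field of characteristic `0`) with
uniformizer `π`, and let `G = ⟨σ⟩` be cyclic of order `p` acting `O`-linearly on a finite free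
`O`-module `W` such that `σ` is trivial on `W/πW` and `W` has a `σ`-eigenbasis with eigenvalues
`p`-th roots of unity. Then `H²(G,W) ≅ W^G / p·W^G`, where for cyclic `G` of order `p`
`H²(G,W) = ker(σ−1)/Im(Tr)` with `Tr = ∑_{j<p} σ^j`. -/
theorem stmt2 {O W : Type*} [CommRing O] [IsDomain O] [IsDiscreteValuationRing O] [CharZero O]
    (π : O) (hπ : Irreducible π)
    [AddCommGroup W] [Module O W]
    {p : ℕ} (hp : p.Prime) {s : ℕ} (b : Module.Basis (Fin s) O W)
    (σ : W →ₗ[O] W) (hσ : σ ^ p = LinearMap.id)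
    (htriv : ∀ w : W, ∃ v : W, σ w - w = π • v)
    (ξ : Fin s → O) (hξ : ∀ i, ξ i ^ p = 1) (heig : ∀ i, σ (b i) = ξ i • b i) :
    Nonempty
      ((↥(LinearMap.ker (σ - LinearMap.id)) ⧸
          (LinearMap.range (∑ j ∈ Finset.range p, σ ^ j)).comap
            (LinearMap.ker (σ - LinearMap.id)).subtype) ≃ₗ[O]
        (↥(LinearMap.ker (σ - LinearMap.id)) ⧸
          ((p : O) • LinearMap.ker (σ - LinearMap.id)).comap
            (LinearMap.ker (σ - LinearMap.id)).subtype)) := by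
  classical
  set K := LinearMap.ker (σ - LinearMap.id) with hK
  set T : W →ₗ[O] W := ∑ j ∈ Finset.range p, σ ^ j with hT
  have hmemK : ∀ x : W, x ∈ K ↔ σ x = x := by
    intro x
    simp [hK, LinearMap.mem_ker, sub_eq_zero]
  -- action of powers of σ on the basis
  have hpow : ∀ (j : ℕ) (i : Fin s), (σ ^ j) (b i) = (ξ i ^ j) • b i := by
    intro j i
    induction j with
    | zero => simp
    | succ n ih =>
      rw [pow_succ', Module.End.mul_apply, ih, map_smul, heig, smul_smul, ← pow_succ]
  -- geometric sums of eigenvalues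
  have hgeom : ∀ i, (∑ j ∈ Finset.range p, ξ i ^ j) = if ξ i = 1 then (p : O) else 0 := by
    intro i
    by_cases h : ξ i = 1
    · simp [h]
    · have hmul : (∑ j ∈ Finset.range p, ξ i ^ j) * (ξ i - 1) = 0 := by
        rw [geom_sum_mul, hξ i, sub_self]
      rcases mul_eq_zero.mp hmul with h0 | h0
      · simp [h, h0]
      · exact absurd (sub_eq_zero.mp h0) h
  -- T on the basis
  have hTb : ∀ i, T (b i) = if ξ i = 1 then (p : O) • b i else 0 := by
    intro i
    rw [hT, LinearMap.sum_apply]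
    simp only [hpow]
    rw [← Finset.sum_smul, hgeom i]
    split_ifs <;> simp
  -- the range of T is p • K
  have hrange : LinearMap.range T = (p : O) • K := by
    apply le_antisymm
    · rintro _ ⟨w, rfl⟩
      rw [← SetLike.mem_coe, Submodule.coe_pointwise_smul, Set.mem_smul_set]
      refine ⟨∑ i, (if ξ i = 1 then b.repr w i else 0) • b i, ?_, ?_⟩
      · rw [SetLike.mem_coe, hmemK, map_sum]
        refine Finset.sum_congr rfl fun i _ => ?_
        rw [map_smul, heig]
        by_cases h : ξ i = 1 <;> simp [h]
      · conv_rhs => rw [← b.sum_repr w]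
        rw [map_sum, Finset.smul_sum]
        refine Finset.sum_congr rfl fun i _ => ?_
        rw [map_smul, hTb]
        by_cases h : ξ i = 1 <;> simp [h, smul_smul, mul_comm]
    · rintro x hx
      rw [← SetLike.mem_coe, Submodule.coe_pointwise_smul, Set.mem_smul_set] at hx
      obtain ⟨y, hyK, rfl⟩ := hx
      refine ⟨y, ?_⟩
      have hy : σ y = y := (hmemK y).mp hyK
      have hjy : ∀ j : ℕ, (σ ^ j) y = y := by
        intro j
        induction j with
        | zero => simp
        | succ n ih => rw [pow_succ', Module.End.mul_apply, ih, hy]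
      rw [hT, LinearMap.sum_apply]
      simp only [hjy, Finset.sum_const, Finset.card_range]
      exact (Nat.cast_smul_eq_nsmul O p y).symm
  exact ⟨Submodule.quotEquivOfEq _ _ (by rw [hrange])⟩
end

section
/- Let A be a Dedekind domain with fraction field K, let G be a finite group acting on R = A[X_1, …, X_n] by graded A-algebra automorphisms (A-linearly on degree 1), and suppose there is no nontrivial group homomorphism G → K^×. Let S = R^G, and suppose x ∈ R is a homogeneous element such that the ideal (x) of R is G-stable (i.e., (σ(x)) = (x) for all σ ∈ G). Then x ∈ S, i.e., σ(x) = x for all σ ∈ G. -/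
open MvPolynomial

lemma mv_isUnit_eq_C {A : Type*} [CommRing A] [IsDomain A] :
    ∀ {n : ℕ} {p : MvPolynomial (Fin n) A}, IsUnit p →
      ∃ a : A, IsUnit a ∧ p = MvPolynomial.C a := by
  intro n
  induction n with
  | zero =>
    intro p hp
    refine ⟨constantCoeff p, hp.map _, ?_⟩
    exact p.eq_C_of_isEmpty
  | succ n ih =>
    intro p hp
    have h2 : IsUnit (MvPolynomial.finSuccEquiv A n p) := hp.map _
    obtain ⟨r, hr, hrp⟩ := Polynomial.isUnit_iff.mp h2
    obtain ⟨a, ha, rfl⟩ := ih hr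
    refine ⟨a, ha, ?_⟩
    have := congrArg (MvPolynomial.finSuccEquiv A n).symm hrp
    rw [AlgEquiv.symm_apply_apply] at this
    rw [← this]
    have h3 := RingHom.congr_fun (MvPolynomial.finSuccEquiv_comp_C_eq_C (R := A) n) a
    simpa using h3

/-- Let `A` be a Dedekind domain with fraction field `K`, `G` a finite group acting on
`R = A[X₁,…,Xₙ]` by graded `A`-algebra automorphisms, with no nontrivial homomorphism
`G → Kˣ`. If `x` is homogeneous and the ideal `(x)` is `G`-stable, then `x` is `G`-invariant. -/
theorem stmt10 {A : Type*} [CommRing A] [IsDomain A] [IsDedekindDomain A]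
    {n : ℕ} {G : Type*} [Group G] [Finite G]
    (act : G →* (MvPolynomial (Fin n) A ≃ₐ[A] MvPolynomial (Fin n) A))
    (hgr : ∀ (g : G) (d : ℕ) (f : MvPolynomial (Fin n) A),
      f.IsHomogeneous d → (act g f).IsHomogeneous d)
    (hhom : ∀ φ : G →* (FractionRing A)ˣ, φ = 1)
    (x : MvPolynomial (Fin n) A) {d : ℕ} (hx : x.IsHomogeneous d)
    (hid : ∀ g : G, Ideal.span {act g x} = Ideal.span {x}) :
    ∀ g : G, act g x = x := by
  by_cases hx0 : x = 0
  · intro g; rw [hx0]; exact map_zero (act g : MvPolynomial (Fin n) A ≃ₐ[A] _)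
  have key : ∀ g : G, ∃ a : A, IsUnit a ∧ act g x = MvPolynomial.C a * x := by
    intro g
    obtain ⟨u, hu⟩ := Ideal.span_singleton_eq_span_singleton.mp (hid g)
    obtain ⟨a, ha, hCa⟩ := mv_isUnit_eq_C (u⁻¹ : (MvPolynomial (Fin n) A)ˣ).isUnit
    refine ⟨a, ha, ?_⟩
    have : act g x = x * (u⁻¹ : (MvPolynomial (Fin n) A)ˣ) :=
      (Units.eq_mul_inv_iff_mul_eq u).mpr hu
    rw [this, hCa, mul_comm]
  choose c hcu hc using key
  -- uniqueness helper
  have huniq : ∀ a b : A, MvPolynomial.C a * x = MvPolynomial.C b * x → a = b := by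
    intro a b h
    have := mul_right_cancel₀ hx0 h
    exact MvPolynomial.C_injective _ _ this
  have hc1 : c 1 = 1 := by
    apply huniq
    rw [← hc 1, map_one, map_one, one_mul]
    rfl
  have hcmul : ∀ g h : G, c (g * h) = c g * c h := by
    intro g h
    apply huniq
    have e1 : (act (g * h)) x = MvPolynomial.C (c g * c h) * x := by
      rw [map_mul act]
      show (act g) ((act h) x) = _
      have hCc : (act g) (MvPolynomial.C (c h)) = MvPolynomial.C (c h) := by
        simpa using (act g).commutes (c h)
      rw [hc h, map_mul, hCc, hc g, map_mul]
      ring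
    rw [← hc (g * h)]
    exact e1
  -- build homomorphism to (FractionRing A)ˣ
  set K := FractionRing A
  let φ : G →* Kˣ :=
    { toFun := fun g => Units.map (algebraMap A K : A →* K) (hcu g).unit
      map_one' := by
        apply Units.ext
        simp [hc1]
      map_mul' := by
        intro g h
        apply Units.ext
        simp [hcmul g h, map_mul] }
  have hφ := hhom φ
  intro g
  have h1 : algebraMap A K (c g) = 1 := by
    have := congrArg (fun ψ : G →* Kˣ => ((ψ g : Kˣ) : K)) hφ
    simpa [φ] using this
  have : c g = 1 := by
    apply IsFractionRing.injective A K
    rw [h1, map_one]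
  rw [hc g, this, map_one, one_mul]
end
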